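/- Let 0 < α < 1 and β > 0, let φ be an analytic self-map of the open unit disk D, and let g be analytic on D. Then the operator U_gC_φ, defined by (U_gC_φ f)(z) = ∫₀^z f(φ(ξ)) g'(ξ) dξ, is bounded from Z^α to Z^β if and only if g'·φ' ∈ H_{v_β}^∞ and g'' ∈ H_{v_β}^∞. -/

import Mathlib

noncomputable section

/-- The open unit disk in the complex plane. -/
def uD : Set ℂ := Metric.ball 0 1

/-- The Zygmund-type quantity `(1-|z|^2)^a * |f''(z)|`. -/
def zygS (a : ℝ) (f : ℂ → ℂ) (z : ℂ) : ℝ := (1 - ‖z‖ ^ 2) ^ a * ‖deriv (deriv f) z‖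

/-- Membership in the Zygmund-type space `Z^a`. -/
def memZ (a : ℝ) (f : ℂ → ℂ) : Prop :=
  AnalyticOn ℂ f uD ∧ ∃ M : ℝ, ∀ z ∈ uD, zygS a f z ≤ M

/-- The Zygmund-type norm `‖f‖_{Z^a} = |f 0| + |f' 0| + sup_{z ∈ D} (1-|z|^2)^a |f''(z)|`. -/
def zNorm (a : ℝ) (f : ℂ → ℂ) : ℝ := ‖f 0‖ + ‖deriv f 0‖ + sSup (zygS a f '' uD)

/-- Membership in the weighted space `H^∞_{v_b}` (for `u` analytic on `uD`). -/
def memHv (b : ℝ) (u : ℂ → ℂ) : Prop :=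
  ∃ M : ℝ, ∀ z ∈ uD, (1 - ‖z‖ ^ 2) ^ b * ‖u z‖ ≤ M

/-- `T` is a bounded operator from `Z^a` to `Z^b`. -/
def boundedOp (a b : ℝ) (T : (ℂ → ℂ) → ℂ → ℂ) : Prop :=
  (∀ f, memZ a f → memZ b (T f)) ∧
    ∃ C > 0, ∀ f, memZ a f → zNorm b (T f) ≤ C * zNorm a f

/-- `(U_g C_φ f)(z) = ∫₀^z f(φ(ξ)) g'(ξ) dξ`, parametrized along the segment from `0` to `z`. -/
def UgCphi (g φ : ℂ → ℂ) (f : ℂ → ℂ) : ℂ → ℂ :=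
  fun z => ∫ t in (0:ℝ)..1, z * (f (φ ((t : ℂ) * z)) * deriv g ((t : ℂ) * z))


/-!
Writing `U_g C_φ f` as the radial primitive of `(f ∘ φ) g'` gives
`(U_g C_φ f)'' = (f' ∘ φ) g'φ' + (f ∘ φ) g''`.
Applied to `f = 1` and `f = z`, which lie in every `Z^α`, this yields `g''` and `g'φ' + φ g''`,
so boundedness forces both weights to be finite since `|φ| < 1`.
Conversely, for `α < 1` the bound `|f''(w)| ≤ ‖f‖ (1 - |w|)^(-α)` is integrable along radii,
so `f'` and `f` are bounded on the disk by `‖f‖_{Z^α} / (1 - α)`, and each term of the formula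
is controlled by the weighted sup norms of `g'φ'` and `g''`.
-/
open Metric Set Filter Topology

lemma HasDerivAt.comp_ofReal_mul_const {F : ℂ → ℂ} {F' z : ℂ} {t : ℝ}
    (hF : HasDerivAt F F' ((t : ℂ) * z)) :
    HasDerivAt (fun s : ℝ => F ((s : ℂ) * z)) (z * F') t := by
  have := (hF.comp (t : ℂ) ((hasDerivAt_id (t : ℂ)).mul_const z)).comp_ofReal
  simpa [mul_comm] using this

section RadialIntegral

def radialIntegral (h : ℂ → ℂ) (z : ℂ) : ℂ := ∫ t in (0 : ℝ)..1, z * h ((t : ℂ) * z)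

variable {h : ℂ → ℂ} {r : ℝ} {z : ℂ}

lemma radialIntegral_zero_right : radialIntegral h 0 = 0 := by
  simp [radialIntegral]

lemma ofReal_mul_mem_ball {t : ℝ} (ht : t ∈ Icc (0 : ℝ) 1) (hz : z ∈ ball (0 : ℂ) r) :
    (t : ℂ) * z ∈ ball (0 : ℂ) r := by
  rw [mem_ball_zero_iff] at hz ⊢
  rw [norm_mul, Complex.norm_real, Real.norm_of_nonneg ht.1]
  nlinarith [norm_nonneg z, ht.2]

lemma radialIntegral_eq_sub {F : ℂ → ℂ} (hF : ∀ w ∈ ball (0 : ℂ) r, HasDerivAt F (h w) w)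
    (hh : ContinuousOn h (ball (0 : ℂ) r)) (hz : z ∈ ball (0 : ℂ) r) :
    radialIntegral h z = F z - F 0 := by
  have hpath : ∀ t ∈ uIcc (0 : ℝ) 1, (t : ℂ) * z ∈ ball (0 : ℂ) r := fun t ht =>
    ofReal_mul_mem_ball (by rwa [uIcc_of_le zero_le_one] at ht) hz
  have hcont : ContinuousOn (fun t : ℝ => z * h ((t : ℂ) * z)) (uIcc 0 1) :=
    continuousOn_const.mul (hh.comp (by fun_prop) hpath)
  have := intervalIntegral.integral_eq_sub_of_hasDerivAt
    (fun t ht => (hF _ (hpath t ht)).comp_ofReal_mul_const) hcont.intervalIntegrable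
  simpa [radialIntegral] using this

lemma hasDerivAt_radialIntegral (hh : DifferentiableOn ℂ h (ball (0 : ℂ) r))
    (hz : z ∈ ball (0 : ℂ) r) : HasDerivAt (radialIntegral h) (h z) z := by
  obtain ⟨F, hF⟩ := hh.isExactOn_ball
  have hT : radialIntegral h =ᶠ[𝓝 z] fun w => F w - F 0 :=
    eventually_of_mem (isOpen_ball.mem_nhds hz) fun w hw =>
      radialIntegral_eq_sub hF hh.continuousOn hw
  exact ((hF z hz).sub_const (F 0)).congr_of_eventuallyEq hT

lemma differentiableOn_radialIntegral (hh : DifferentiableOn ℂ h (ball (0 : ℂ) r)) :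
    DifferentiableOn ℂ (radialIntegral h) (ball (0 : ℂ) r) := fun _ hw =>
  (hasDerivAt_radialIntegral hh hw).differentiableAt.differentiableWithinAt

lemma deriv_deriv_radialIntegral (hh : DifferentiableOn ℂ h (ball (0 : ℂ) r))
    (hz : z ∈ ball (0 : ℂ) r) : deriv (deriv (radialIntegral h)) z = deriv h z :=
  EventuallyEq.deriv_eq <| eventually_of_mem (isOpen_ball.mem_nhds hz) fun _ hw =>
    (hasDerivAt_radialIntegral hh hw).deriv

end RadialIntegral

section Growth

variable {α M B : ℝ} {f : ℂ → ℂ} {z : ℂ}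

lemma isOpen_uD : IsOpen uD := isOpen_ball

lemma zero_mem_uD : (0 : ℂ) ∈ uD := mem_ball_self one_pos

lemma norm_lt_one_of_mem_uD (hz : z ∈ uD) : ‖z‖ < 1 := mem_ball_zero_iff.1 hz

lemma one_sub_norm_sq_rpow_nonneg (hz : z ∈ uD) (a : ℝ) : 0 ≤ (1 - ‖z‖ ^ 2) ^ a := by
  have := norm_lt_one_of_mem_uD hz
  exact Real.rpow_nonneg (by nlinarith [norm_nonneg z]) a

lemma nonneg_of_forall_weight_mul_norm_le {a : ℝ} {u : ℂ → ℂ}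
    (hM : ∀ z ∈ uD, (1 - ‖z‖ ^ 2) ^ a * ‖u z‖ ≤ M) : 0 ≤ M :=
  (mul_nonneg (one_sub_norm_sq_rpow_nonneg zero_mem_uD a) (norm_nonneg _)).trans
    (hM 0 zero_mem_uD)

lemma zygS_nonneg (hz : z ∈ uD) (a : ℝ) : 0 ≤ zygS a f z :=
  mul_nonneg (one_sub_norm_sq_rpow_nonneg hz a) (norm_nonneg _)

lemma norm_deriv_deriv_le_of_zygS_le (hα : 0 ≤ α) (hM : ∀ w ∈ uD, zygS α f w ≤ M)
    (hz : z ∈ uD) : ‖deriv (deriv f) z‖ ≤ M * (1 - ‖z‖) ^ (-α) := by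
  have hz1 := norm_lt_one_of_mem_uD hz
  have hpos : 0 < (1 - ‖z‖) ^ α := Real.rpow_pos_of_pos (by linarith) α
  have hweight : (1 - ‖z‖) ^ α ≤ (1 - ‖z‖ ^ 2) ^ α :=
    Real.rpow_le_rpow (by linarith) (by nlinarith [norm_nonneg z]) hα
  rw [Real.rpow_neg (by linarith), ← div_eq_mul_inv, le_div_iff₀ hpos, mul_comm]
  exact (mul_le_mul_of_nonneg_right hweight (norm_nonneg _)).trans (hM z hz)

-- `B` is the primitive of the radial majorant `M ‖z‖ (1 - s ‖z‖)^(-α)` of `s ↦ z f''(s z)`,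
-- and it stays below `M / (1 - α)` because `α < 1`.
lemma norm_deriv_le_of_zygS_le (hα0 : 0 ≤ α) (hα1 : α < 1) (hf : DifferentiableOn ℂ f uD)
    (hM : ∀ w ∈ uD, zygS α f w ≤ M) (hz : z ∈ uD) :
    ‖deriv f z‖ ≤ ‖deriv f 0‖ + M / (1 - α) := by
  set r := ‖z‖
  have hr1 : r < 1 := norm_lt_one_of_mem_uD hz
  have hM0 : 0 ≤ M := nonneg_of_forall_weight_mul_norm_le hM
  have hα : 0 < 1 - α := by linarith
  have hbase : ∀ s ∈ Icc (0 : ℝ) 1, 0 < 1 - s * r := fun s hs => by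
    nlinarith [norm_nonneg z, hs.2]
  have hpath : ∀ s ∈ Icc (0 : ℝ) 1, (s : ℂ) * z ∈ uD := fun s hs => ofReal_mul_mem_ball hs hz
  have hf'' : ∀ s ∈ Icc (0 : ℝ) 1,
      HasDerivAt (deriv f) (deriv (deriv f) ((s : ℂ) * z)) ((s : ℂ) * z) := fun s hs =>
    ((hf.deriv isOpen_uD).differentiableAt (isOpen_uD.mem_nhds (hpath s hs))).hasDerivAt
  let u : ℝ → ℂ := fun s => deriv f ((s : ℂ) * z) - deriv f 0
  let B : ℝ → ℝ := fun s => M / (1 - α) * (1 - (1 - s * r) ^ (1 - α))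
  have hu : ∀ s ∈ Icc (0 : ℝ) 1, HasDerivAt u (z * deriv (deriv f) ((s : ℂ) * z)) s :=
    fun s hs => ((hf'' s hs).comp_ofReal_mul_const).sub_const _
  have hB : ∀ s ∈ Icc (0 : ℝ) 1, HasDerivAt B (M * r * (1 - s * r) ^ (-α)) s := by
    intro s hs
    have hlin : HasDerivAt (fun s : ℝ => 1 - s * r) (-r) s := by
      simpa using ((hasDerivAt_id s).mul_const r).const_sub 1
    have := ((hlin.rpow_const (p := 1 - α) (Or.inl (hbase s hs).ne')).const_sub 1).const_mul
      (M / (1 - α))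
    refine this.congr_deriv ?_
    rw [show 1 - α - 1 = -α by ring]
    field_simp
  have hbound : ∀ s ∈ Ico (0 : ℝ) 1,
      ‖z * deriv (deriv f) ((s : ℂ) * z)‖ ≤ M * r * (1 - s * r) ^ (-α) := by
    intro s hs
    have hnorm : ‖(s : ℂ) * z‖ = s * r := by
      rw [norm_mul, Complex.norm_real, Real.norm_of_nonneg hs.1]
    rw [norm_mul, mul_comm M, mul_assoc, ← hnorm]
    exact mul_le_mul_of_nonneg_left
      (norm_deriv_deriv_le_of_zygS_le hα0 hM (hpath s (Ico_subset_Icc_self hs))) (norm_nonneg z)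
  have key := image_norm_le_of_norm_deriv_right_le_deriv_boundary'
    (fun s hs => (hu s hs).continuousAt.continuousWithinAt)
    (fun s hs => (hu s (Ico_subset_Icc_self hs)).hasDerivWithinAt)
    (by simp [u, B]) (fun s hs => (hB s hs).continuousAt.continuousWithinAt)
    (fun s hs => (hB s (Ico_subset_Icc_self hs)).hasDerivWithinAt) hbound
    (right_mem_Icc.2 zero_le_one)
  have hB1 : B 1 ≤ M / (1 - α) := by
    have : 0 ≤ (1 - 1 * r) ^ (1 - α) := Real.rpow_nonneg (by linarith) _
    have : 0 ≤ M / (1 - α) := div_nonneg hM0 hα.le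
    simp only [B]
    nlinarith
  calc ‖deriv f z‖ ≤ ‖deriv f 0‖ + ‖u 1‖ := by
        simpa [u] using norm_le_norm_add_norm_sub' (deriv f z) (deriv f 0)
    _ ≤ ‖deriv f 0‖ + M / (1 - α) := by linarith

lemma norm_le_of_norm_deriv_le (hf : DifferentiableOn ℂ f uD) (hB : ∀ w ∈ uD, ‖deriv f w‖ ≤ B)
    (hz : z ∈ uD) : ‖f z‖ ≤ ‖f 0‖ + B := by
  have hB0 : 0 ≤ B := (norm_nonneg _).trans (hB 0 zero_mem_uD)
  have hmvt := (convex_ball (0 : ℂ) 1).norm_image_sub_le_of_norm_deriv_le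
    (fun w hw => hf.differentiableAt (isOpen_uD.mem_nhds hw)) hB zero_mem_uD hz
  rw [sub_zero] at hmvt
  calc ‖f z‖ ≤ ‖f 0‖ + ‖f z - f 0‖ := norm_le_norm_add_norm_sub' _ _
    _ ≤ ‖f 0‖ + B * 1 := by
      gcongr
      exact hmvt.trans (mul_le_mul_of_nonneg_left (norm_lt_one_of_mem_uD hz).le hB0)
    _ = ‖f 0‖ + B := by rw [mul_one]

end Growth

section ZygmundNorm

variable {α : ℝ} {f : ℂ → ℂ} {z : ℂ}

lemma zygS_le_sSup (hf : memZ α f) (hz : z ∈ uD) : zygS α f z ≤ sSup (zygS α f '' uD) := by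
  obtain ⟨-, M, hM⟩ := hf
  exact le_csSup ⟨M, forall_mem_image.2 hM⟩ (mem_image_of_mem _ hz)

lemma sSup_zygS_nonneg (hf : memZ α f) : 0 ≤ sSup (zygS α f '' uD) :=
  (zygS_nonneg zero_mem_uD α).trans (zygS_le_sSup hf zero_mem_uD)

lemma zNorm_nonneg (hf : memZ α f) : 0 ≤ zNorm α f := by
  have := sSup_zygS_nonneg hf
  unfold zNorm
  positivity

lemma norm_add_norm_deriv_add_sSup_div_le (hα0 : 0 ≤ α) (hα1 : α < 1) :
    ‖f 0‖ + (‖deriv f 0‖ + sSup (zygS α f '' uD) / (1 - α)) ≤ zNorm α f / (1 - α) := by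
  have hα : 0 < 1 - α := by linarith
  have hf0 := le_div_self (norm_nonneg (f 0)) hα (by linarith)
  have hf'0 := le_div_self (norm_nonneg (deriv f 0)) hα (by linarith)
  rw [zNorm, add_div, add_div]
  linarith

lemma norm_deriv_le_zNorm (hα0 : 0 ≤ α) (hα1 : α < 1) (hf : memZ α f) (hz : z ∈ uD) :
    ‖deriv f z‖ ≤ zNorm α f / (1 - α) :=
  calc ‖deriv f z‖ ≤ ‖deriv f 0‖ + sSup (zygS α f '' uD) / (1 - α) :=
        norm_deriv_le_of_zygS_le hα0 hα1 hf.1.differentiableOn (fun _ hw => zygS_le_sSup hf hw) hz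
    _ ≤ ‖f 0‖ + (‖deriv f 0‖ + sSup (zygS α f '' uD) / (1 - α)) :=
        le_add_of_nonneg_left (norm_nonneg _)
    _ ≤ zNorm α f / (1 - α) := norm_add_norm_deriv_add_sSup_div_le hα0 hα1

lemma norm_le_zNorm (hα0 : 0 ≤ α) (hα1 : α < 1) (hf : memZ α f) (hz : z ∈ uD) :
    ‖f z‖ ≤ zNorm α f / (1 - α) :=
  (norm_le_of_norm_deriv_le hf.1.differentiableOn
    (fun _ hw => norm_deriv_le_of_zygS_le hα0 hα1 hf.1.differentiableOn
      (fun _ hw' => zygS_le_sSup hf hw') hw) hz).trans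
    (norm_add_norm_deriv_add_sSup_div_le hα0 hα1)

end ZygmundNorm

section Operator

variable {α β : ℝ} {φ g f : ℂ → ℂ} {z : ℂ}

lemma UgCphi_eq_radialIntegral :
    UgCphi g φ f = radialIntegral (fun w => f (φ w) * deriv g w) := rfl

lemma differentiableOn_comp_mul_deriv (hφ : DifferentiableOn ℂ φ uD) (hφm : MapsTo φ uD uD)
    (hg : DifferentiableOn ℂ g uD) (hf : DifferentiableOn ℂ f uD) :
    DifferentiableOn ℂ (fun w => f (φ w) * deriv g w) uD :=
  (hf.comp hφ hφm).mul (hg.deriv isOpen_uD)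

variable (hφ : DifferentiableOn ℂ φ uD) (hφm : MapsTo φ uD uD) (hg : DifferentiableOn ℂ g uD)
include hφ hφm hg

lemma analyticOn_UgCphi (hf : DifferentiableOn ℂ f uD) : AnalyticOn ℂ (UgCphi g φ f) uD :=
  (Complex.analyticOn_iff_differentiableOn isOpen_uD).2 <|
    differentiableOn_radialIntegral (differentiableOn_comp_mul_deriv hφ hφm hg hf)

lemma deriv_UgCphi_zero (hf : DifferentiableOn ℂ f uD) :
    deriv (UgCphi g φ f) 0 = f (φ 0) * deriv g 0 :=
  (hasDerivAt_radialIntegral (differentiableOn_comp_mul_deriv hφ hφm hg hf) zero_mem_uD).deriv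

lemma deriv_deriv_UgCphi (hf : DifferentiableOn ℂ f uD) (hz : z ∈ uD) :
    deriv (deriv (UgCphi g φ f)) z =
      deriv f (φ z) * (deriv g z * deriv φ z) + f (φ z) * deriv (deriv g) z := by
  rw [UgCphi_eq_radialIntegral,
    deriv_deriv_radialIntegral (differentiableOn_comp_mul_deriv hφ hφm hg hf) hz]
  have hfφ : HasDerivAt (fun w => f (φ w)) (deriv f (φ z) * deriv φ z) z :=
    (hf.differentiableAt (isOpen_uD.mem_nhds (hφm hz))).hasDerivAt.comp z
      (hφ.differentiableAt (isOpen_uD.mem_nhds hz)).hasDerivAt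
  have hg' : HasDerivAt (deriv g) (deriv (deriv g) z) z :=
    ((hg.deriv isOpen_uD).differentiableAt (isOpen_uD.mem_nhds hz)).hasDerivAt
  exact (hfφ.mul hg').deriv.trans (by ring)

lemma memHv_of_mapsTo_memZ (hT : ∀ f, memZ α f → memZ β (UgCphi g φ f)) :
    memHv β (fun z => deriv g z * deriv φ z) ∧ memHv β (deriv (deriv g)) := by
  obtain ⟨-, M₀, hM₀⟩ := hT (fun _ => 1) ⟨analyticOn_const, 0, fun z _ => by simp [zygS]⟩
  obtain ⟨-, M₁, hM₁⟩ := hT id ⟨analyticOn_id, 0, fun z _ => by simp [zygS]⟩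
  have hg'' : ∀ z ∈ uD, (1 - ‖z‖ ^ 2) ^ β * ‖deriv (deriv g) z‖ ≤ M₀ := fun z hz => by
    simpa [zygS, deriv_deriv_UgCphi hφ hφm hg (differentiableOn_const 1) hz] using hM₀ z hz
  refine ⟨⟨M₁ + M₀, fun z hz => ?_⟩, M₀, hg''⟩
  have hid := hM₁ z hz
  rw [zygS, deriv_deriv_UgCphi hφ hφm hg differentiableOn_id hz] at hid
  simp only [deriv_id, one_mul, id] at hid
  have hw := one_sub_norm_sq_rpow_nonneg hz β
  have hφz : ‖φ z‖ ≤ 1 := (norm_lt_one_of_mem_uD (hφm hz)).le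
  have hsplit : ‖deriv g z * deriv φ z‖ ≤
      ‖deriv g z * deriv φ z + φ z * deriv (deriv g) z‖ + ‖φ z‖ * ‖deriv (deriv g) z‖ := by
    simpa [norm_mul] using norm_le_norm_add_norm_sub' (deriv g z * deriv φ z)
      (deriv g z * deriv φ z + φ z * deriv (deriv g) z)
  calc (1 - ‖z‖ ^ 2) ^ β * ‖deriv g z * deriv φ z‖
      ≤ (1 - ‖z‖ ^ 2) ^ β * ‖deriv g z * deriv φ z + φ z * deriv (deriv g) z‖
        + ‖φ z‖ * ((1 - ‖z‖ ^ 2) ^ β * ‖deriv (deriv g) z‖) :=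
        (mul_le_mul_of_nonneg_left hsplit hw).trans_eq (by ring)
    _ ≤ M₁ + 1 * M₀ := by
        gcongr
        exacts [hg'' z hz]
    _ = M₁ + M₀ := by rw [one_mul]

lemma zygS_UgCphi_le (hα0 : 0 ≤ α) (hα1 : α < 1) {M₁ M₂ : ℝ}
    (hM₁ : ∀ z ∈ uD, (1 - ‖z‖ ^ 2) ^ β * ‖deriv g z * deriv φ z‖ ≤ M₁)
    (hM₂ : ∀ z ∈ uD, (1 - ‖z‖ ^ 2) ^ β * ‖deriv (deriv g) z‖ ≤ M₂) (hf : memZ α f)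
    (hz : z ∈ uD) : zygS β (UgCphi g φ f) z ≤ zNorm α f / (1 - α) * (M₁ + M₂) := by
  have hw := one_sub_norm_sq_rpow_nonneg hz β
  have hf' := norm_deriv_le_zNorm hα0 hα1 hf (hφm hz)
  have hf0 := norm_le_zNorm hα0 hα1 hf (hφm hz)
  have hN : 0 ≤ zNorm α f / (1 - α) := (norm_nonneg _).trans hf0
  rw [zygS, deriv_deriv_UgCphi hφ hφm hg hf.1.differentiableOn hz]
  calc (1 - ‖z‖ ^ 2) ^ β * ‖deriv f (φ z) * (deriv g z * deriv φ z) + f (φ z) * deriv (deriv g) z‖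
      ≤ ‖deriv f (φ z)‖ * ((1 - ‖z‖ ^ 2) ^ β * ‖deriv g z * deriv φ z‖)
        + ‖f (φ z)‖ * ((1 - ‖z‖ ^ 2) ^ β * ‖deriv (deriv g) z‖) := by
        refine (mul_le_mul_of_nonneg_left (norm_add_le _ _) hw).trans_eq ?_
        simp only [norm_mul]
        ring
    _ ≤ zNorm α f / (1 - α) * M₁ + zNorm α f / (1 - α) * M₂ :=
        add_le_add (mul_le_mul hf' (hM₁ z hz) (by positivity) hN)
          (mul_le_mul hf0 (hM₂ z hz) (by positivity) hN)
    _ = zNorm α f / (1 - α) * (M₁ + M₂) := by ring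

lemma boundedOp_UgCphi_of_memHv (hα0 : 0 ≤ α) (hα1 : α < 1)
    (h₁ : memHv β (fun z => deriv g z * deriv φ z)) (h₂ : memHv β (deriv (deriv g))) :
    boundedOp α β (UgCphi g φ) := by
  obtain ⟨M₁, hM₁⟩ := h₁
  obtain ⟨M₂, hM₂⟩ := h₂
  have hM₁0 := nonneg_of_forall_weight_mul_norm_le hM₁
  have hM₂0 := nonneg_of_forall_weight_mul_norm_le hM₂
  have hα : 0 < 1 - α := by linarith
  have hzyg := fun f (hf : memZ α f) z (hz : z ∈ uD) =>
    zygS_UgCphi_le hφ hφm hg hα0 hα1 hM₁ hM₂ hf hz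
  refine ⟨fun f hf => ⟨analyticOn_UgCphi hφ hφm hg hf.1.differentiableOn, _, hzyg f hf⟩,
    (‖deriv g 0‖ + M₁ + M₂ + 1) / (1 - α), by positivity, fun f hf => ?_⟩
  have hsup : sSup (zygS β (UgCphi g φ f) '' uD) ≤ zNorm α f / (1 - α) * (M₁ + M₂) :=
    csSup_le (Nonempty.image _ ⟨0, zero_mem_uD⟩) (forall_mem_image.2 (hzyg f hf))
  have hT0 : ‖deriv (UgCphi g φ f) 0‖ ≤ zNorm α f / (1 - α) * ‖deriv g 0‖ := by
    rw [deriv_UgCphi_zero hφ hφm hg hf.1.differentiableOn, norm_mul]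
    gcongr
    exact norm_le_zNorm hα0 hα1 hf (hφm zero_mem_uD)
  have hN := div_nonneg (zNorm_nonneg hf) hα.le
  rw [zNorm, UgCphi_eq_radialIntegral, radialIntegral_zero_right, norm_zero, zero_add,
    ← UgCphi_eq_radialIntegral]
  calc ‖deriv (UgCphi g φ f) 0‖ + sSup (zygS β (UgCphi g φ f) '' uD)
      ≤ zNorm α f / (1 - α) * (‖deriv g 0‖ + M₁ + M₂ + 1) := by nlinarith
    _ = (‖deriv g 0‖ + M₁ + M₂ + 1) / (1 - α) * zNorm α f := by ring

end Operator

theorem stmt_11_general (α β : ℝ) (hα0 : 0 < α) (hα1 : α < 1)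
    (φ g : ℂ → ℂ) (hφ : AnalyticOn ℂ φ uD) (hφm : Set.MapsTo φ uD uD)
    (hg : AnalyticOn ℂ g uD) :
    boundedOp α β (UgCphi g φ) ↔
      (memHv β (fun z => deriv g z * deriv φ z) ∧ memHv β (deriv (deriv g))) :=
  ⟨fun hT => memHv_of_mapsTo_memZ hφ.differentiableOn hφm hg.differentiableOn hT.1,
    fun ⟨h₁, h₂⟩ =>
      boundedOp_UgCphi_of_memHv hφ.differentiableOn hφm hg.differentiableOn hα0.le hα1 h₁ h₂⟩

theorem stmt_11 (α β : ℝ) (hα0 : 0 < α) (hα1 : α < 1) (hβ : 0 < β)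
    (φ g : ℂ → ℂ) (hφ : AnalyticOn ℂ φ uD) (hφm : Set.MapsTo φ uD uD)
    (hg : AnalyticOn ℂ g uD) :
    boundedOp α β (UgCphi g φ) ↔
      (memHv β (fun z => deriv g z * deriv φ z) ∧ memHv β (deriv (deriv g))) :=
  stmt_11_general α β hα0 hα1 φ g hφ hφm hg
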